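/- arXiv:1504.02063 — 5 statements merged into one kernel-verified Lean document; each statement's English description precedes it below -/
import Mathlib

section
/- Let ε > 0 and K > 0, and let (r_n), (d_n) be sequences of positive integers with 1 ≤ r_n ≤ n/2, such that r_n ≤ n^{1−ε} and d_n ≥ K · log₂ n for all sufficiently large n. Then there exists a sequence (c_n), where c_n is a non-adaptive (r_n,d_n,n)-locally decodable source code, that is competitively optimal, i.e. limsup_{n→∞} E[ℓ(c_n(X^n))] / log₂ C(n,r_n) < ∞. -/
/-!
Encode the support `s` of `x` by a Bloom filter: `t = ⌈K log₂ n⌉ ≤ d` hash functions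
`[n] → [m]` with `m = 2^⌈2/K⌉ r t` cells, and decode `x_j` by probing the `t` cells of `j`.
For fixed `s`, a uniformly random hash family has a false positive with probability at most
`n (rt/m)^t ≤ 1/2`, so greedy halving finds `log₂ C(n,r) + 1` families among which every
`r`-set has a good one. The index of that family is written into the codeword length, which a
non-adaptive decoder is allowed to see. The length is then `m + log₂ C(n,r)`, while
`log₂ C(n,r) ≥ r log₂ (n/r) ≥ ε r log₂ n`.
-/

open Filter MeasureTheory

/-- A binary decision tree: internal nodes probe a (1-indexed) position of the
codeword, leaves output a bit. -/
inductive DTree : Type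
  | leaf (b : Bool) : DTree
  | node (pos : ℕ) (lo hi : DTree) : DTree

namespace DTree

/-- Depth of a decision tree. -/
def depth : DTree → ℕ
  | leaf _ => 0
  | node _ l h => 1 + max l.depth h.depth

/-- All probed positions lie in `{1, …, ℓ}`. -/
def boundedBy (ℓ : ℕ) : DTree → Prop
  | leaf _ => True
  | node p l h => 1 ≤ p ∧ p ≤ ℓ ∧ l.boundedBy ℓ ∧ h.boundedBy ℓ

/-- Evaluate the tree on a codeword `w` (positions are 1-indexed). -/
def eval (w : List Bool) : DTree → Bool
  | leaf b => b
  | node p l h => if w.getD (p - 1) false then h.eval w else l.eval w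

end DTree

/-- `x : Fin n → Bool` has exactly `r` ones. -/
def Sparse (n r : ℕ) (x : Fin n → Bool) : Prop :=
  (Finset.univ.filter fun i => x i = true).card = r

instance (n r : ℕ) : DecidablePred (Sparse n r) := fun _ => Nat.decEq _ r

/-- The type of `r`-sparse binary vectors of length `n`. -/
abbrev SparseVec (n r : ℕ) := {x : Fin n → Bool // Sparse n r x}

/-- A non-adaptive `(r,d,n)`-locally decodable source code. -/
structure NonAdaptiveLDC (r d n : ℕ) where
  enc : SparseVec n r → List Bool
  enc_inj : Function.Injective enc
  S : Fin n → ℕ → Finset ℕ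
  S_sub : ∀ j ℓ, S j ℓ ⊆ Finset.Icc 1 ℓ
  S_card : ∀ j ℓ, (S j ℓ).card ≤ d
  g : Fin n → ℕ → (ℕ → Bool) → Bool
  g_local : ∀ j ℓ f f', (∀ i ∈ S j ℓ, f i = f' i) → g j ℓ f = g j ℓ f'
  correct : ∀ x (j : Fin n),
    g j (enc x).length (fun i => (enc x).getD (i - 1) false) = x.1 j

/-- Expected codeword length under the uniform distribution on `r`-sparse vectors. -/
noncomputable def expLenN {r d n : ℕ} (c : NonAdaptiveLDC r d n) : ℝ :=
  (∑ x : SparseVec n r, ((c.enc x).length : ℝ)) / (n.choose r : ℝ)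

open Finset Real

namespace SparseVec

variable {n r : ℕ}

def support (x : SparseVec n r) : Finset (Fin n) := {j | x.1 j = true}

@[simp]
lemma mem_support {x : SparseVec n r} {j : Fin n} : j ∈ x.support ↔ x.1 j = true := by
  simp [support]

lemma card_support (x : SparseVec n r) : x.support.card = r := x.2

def equivFinsetCard (n r : ℕ) : SparseVec n r ≃ {s : Finset (Fin n) // s.card = r} where
  toFun x := ⟨x.support, x.card_support⟩
  invFun s := ⟨fun j => decide (j ∈ s.1), by simpa [Sparse] using s.2⟩
  left_inv x := by ext j; simp
  right_inv s := by ext j; simp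

lemma card_eq_choose (n r : ℕ) : Fintype.card (SparseVec n r) = n.choose r := by
  rw [Fintype.card_congr (equivFinsetCard n r), Fintype.card_finset_len, Fintype.card_fin]

end SparseVec

theorem exists_cover_of_two_mul_card_filter_not_le {α β : Type*} [Fintype α] [Nonempty α]
    (G : α → β → Prop) [∀ a b, Decidable (G a b)] {X : Finset β}
    (hX : ∀ b ∈ X, 2 * #{a | ¬G a b} ≤ Fintype.card α) {k : ℕ} (hk : #X < 2 ^ k) :
    ∃ f : ℕ → α, ∀ b ∈ X, ∃ q < k, G (f q) b := by
  induction k generalizing X with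
  | zero => exact ⟨fun _ => Classical.arbitrary α, fun b hb => by simp_all⟩
  | succ k ih =>
    obtain ⟨a, -, ha⟩ : ∃ a ∈ (univ : Finset α), 2 * #{b ∈ X | ¬G a b} ≤ #X := by
      refine exists_le_of_sum_le univ_nonempty ?_
      calc ∑ a, 2 * #{b ∈ X | ¬G a b} = ∑ b ∈ X, 2 * #{a | ¬G a b} := by
            simp only [← mul_sum, card_filter]; rw [sum_comm]
        _ ≤ ∑ _b ∈ X, Fintype.card α := sum_le_sum hX
        _ = ∑ _a : α, #X := by simp [mul_comm]
    obtain ⟨f, hf⟩ := ih (X := {b ∈ X | ¬G a b}) (fun b hb => hX b (mem_filter.1 hb).1)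
      (by rw [pow_succ] at hk; omega)
    refine ⟨fun | 0 => a | q + 1 => f q, fun b hb => ?_⟩
    by_cases hab : G a b
    · exact ⟨0, k.succ_pos, hab⟩
    · obtain ⟨q, hq, hfq⟩ := hf b (mem_filter.2 ⟨hb, hab⟩)
      exact ⟨q + 1, by omega, hfq⟩

/-- For uniform `σ`, the coordinate `σ j` is independent of the others, on which `T σ` depends:
hence `P(σ j ∈ T σ) ≤ N / |β|`. -/
theorem card_filter_apply_mem_mul_le {ι β : Type*} [Fintype ι] [DecidableEq ι] [Fintype β]
    [DecidableEq β] (j : ι) (T : (ι → β) → Finset β) (hT : ∀ σ τ, (∀ k ≠ j, σ k = τ k) → T σ = T τ)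
    {N : ℕ} (hN : ∀ σ, #(T σ) ≤ N) :
    #{σ | σ j ∈ T σ} * Fintype.card β ≤ Fintype.card (ι → β) * N := by
  rw [← card_univ (α := ι → β)]
  refine card_mul_le_card_mul (fun σ τ => ∀ k ≠ j, σ k = τ k) (fun σ _ => ?_) (fun τ _ => ?_)
  · refine card_le_card_of_injOn (Function.update σ j) (fun b _ => ?_) ?_
    · simpa [bipartiteAbove] using fun k hk => (Function.update_of_ne hk _ _).symm
    · intro b _ b' _ h
      simpa using congrFun h j
  · refine (card_le_card_of_injOn (fun σ => σ j) (fun σ hσ => ?_) ?_).trans (hN τ)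
    · simp only [mem_coe, mem_bipartiteBelow, mem_filter, mem_univ, true_and] at hσ
      simpa [← hT σ τ hσ.2] using hσ.1
    · intro σ hσ σ' hσ' h
      simp only [mem_coe, mem_bipartiteBelow] at hσ hσ'
      funext k
      by_cases hk : k = j
      · subst hk; exact h
      · rw [hσ.2 k hk, hσ'.2 k hk]

section Bloom

variable {ι κ α : Type*} [Fintype κ] [DecidableEq α]

def bloom (σ : ι → κ → α) (s : Finset ι) : Finset α := s.biUnion fun j => univ.image (σ j)

lemma apply_mem_bloom {σ : ι → κ → α} {s : Finset ι} {j : ι} (hj : j ∈ s) (i : κ) :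
    σ j i ∈ bloom σ s :=
  mem_biUnion.2 ⟨j, hj, mem_image_of_mem _ (mem_univ i)⟩

lemma card_bloom_le (σ : ι → κ → α) (s : Finset ι) : #(bloom σ s) ≤ #s * Fintype.card κ :=
  card_biUnion_le_card_mul _ _ _ fun _ _ => card_image_le

lemma bloom_congr {σ τ : ι → κ → α} {s : Finset ι} (h : ∀ j ∈ s, σ j = τ j) :
    bloom σ s = bloom τ s :=
  biUnion_congr rfl fun j hj => by rw [h j hj]

def NoFalsePositive (σ : ι → κ → α) (s : Finset ι) : Prop :=
  ∀ j ∉ s, ∃ i, σ j i ∉ bloom σ s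

lemma NoFalsePositive.mem_iff {σ : ι → κ → α} {s : Finset ι} (h : NoFalsePositive σ s) {j : ι} :
    j ∈ s ↔ ∀ i, σ j i ∈ bloom σ s := by
  refine ⟨fun hj => apply_mem_bloom hj, fun hall => ?_⟩
  by_contra hj
  obtain ⟨i, hi⟩ := h j hj
  exact hi (hall i)

variable [Fintype ι] [DecidableEq ι] [DecidableEq κ] [Fintype α]

instance (σ : ι → κ → α) (s : Finset ι) : Decidable (NoFalsePositive σ s) := by
  unfold NoFalsePositive; infer_instance

lemma card_filter_forall_mem_bloom_mul_le {s : Finset ι} {j : ι} (hj : j ∉ s) :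
    #{σ : ι → κ → α | ∀ i, σ j i ∈ bloom σ s} * Fintype.card α ^ Fintype.card κ
      ≤ Fintype.card (ι → κ → α) * (#s * Fintype.card κ) ^ Fintype.card κ := by
  have h := card_filter_apply_mem_mul_le j
    (fun σ : ι → κ → α => Fintype.piFinset fun _ : κ => bloom σ s)
    (fun σ τ hστ => by rw [bloom_congr fun k hk => hστ k (ne_of_mem_of_not_mem hk hj)])
    (N := (#s * Fintype.card κ) ^ Fintype.card κ)
    (fun σ => by
      rw [Fintype.card_piFinset, prod_const, card_univ]
      exact Nat.pow_le_pow_left (card_bloom_le σ s) _)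
  simpa only [Fintype.mem_piFinset, Fintype.card_fun] using h

lemma card_filter_not_noFalsePositive_mul_le (s : Finset ι) :
    #{σ : ι → κ → α | ¬NoFalsePositive σ s} * Fintype.card α ^ Fintype.card κ
      ≤ Fintype.card ι
        * (Fintype.card (ι → κ → α) * (#s * Fintype.card κ) ^ Fintype.card κ) := by
  have hsub : ({σ | ¬NoFalsePositive σ s} : Finset (ι → κ → α))
      ⊆ sᶜ.biUnion fun j => {σ | ∀ i, σ j i ∈ bloom σ s} := by
    intro σ hσ
    simp only [NoFalsePositive, mem_filter, mem_univ, true_and, not_forall, not_exists,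
      not_not] at hσ
    obtain ⟨j, hj, hall⟩ := hσ
    simpa using ⟨j, hj, hall⟩
  calc _ ≤ (∑ j ∈ sᶜ, #{σ : ι → κ → α | ∀ i, σ j i ∈ bloom σ s})
          * Fintype.card α ^ Fintype.card κ :=
        Nat.mul_le_mul_right _ ((card_le_card hsub).trans card_biUnion_le)
    _ ≤ ∑ _j ∈ sᶜ, Fintype.card (ι → κ → α) * (#s * Fintype.card κ) ^ Fintype.card κ := by
        rw [sum_mul]
        exact sum_le_sum fun j hj => card_filter_forall_mem_bloom_mul_le (mem_compl.1 hj)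
    _ ≤ _ := by
        rw [sum_const, smul_eq_mul]
        exact Nat.mul_le_mul_right _ (card_le_univ _)

lemma two_mul_card_filter_not_noFalsePositive_le [Nonempty α] {s : Finset ι}
    (h : 2 * Fintype.card ι * (#s * Fintype.card κ) ^ Fintype.card κ
      ≤ Fintype.card α ^ Fintype.card κ) :
    2 * #{σ : ι → κ → α | ¬NoFalsePositive σ s} ≤ Fintype.card (ι → κ → α) := by
  refine Nat.le_of_mul_le_mul_right ?_ (pow_pos (Fintype.card_pos (α := α)) (Fintype.card κ))
  calc _ = 2 * (#{σ : ι → κ → α | ¬NoFalsePositive σ s} * Fintype.card α ^ Fintype.card κ) := by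
        ring
    _ ≤ 2 * (Fintype.card ι
          * (Fintype.card (ι → κ → α) * (#s * Fintype.card κ) ^ Fintype.card κ)) :=
        Nat.mul_le_mul_left _ (card_filter_not_noFalsePositive_mul_le s)
    _ = 2 * Fintype.card ι * (#s * Fintype.card κ) ^ Fintype.card κ
          * Fintype.card (ι → κ → α) := by
        ring
    _ ≤ _ := by rw [mul_comm (Fintype.card (ι → κ → α))]; exact Nat.mul_le_mul_right _ h

end Bloom

section BloomCode

variable {n r d t m : ℕ}

/-- The padding by `idx x` zeros lets the decoder read the index of the hash family off the
codeword length. -/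
def bloomEnc (hashes : ℕ → Fin n → Fin t → Fin m) (idx : SparseVec n r → ℕ)
    (x : SparseVec n r) : List Bool :=
  List.ofFn (fun v : Fin m => decide (v ∈ bloom (hashes (idx x)) x.support)) ++
    List.replicate (idx x) false

def bloomDec (hashes : ℕ → Fin n → Fin t → Fin m) (j : Fin n) (ℓ : ℕ) (f : ℕ → Bool) : Bool :=
  decide (m ≤ ℓ ∧ ∀ i, f (hashes (ℓ - m) j i + 1) = true)

lemma length_bloomEnc (hashes : ℕ → Fin n → Fin t → Fin m) (idx : SparseVec n r → ℕ)
    (x : SparseVec n r) : (bloomEnc hashes idx x).length = m + idx x := by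
  simp [bloomEnc]

lemma getD_bloomEnc (hashes : ℕ → Fin n → Fin t → Fin m) (idx : SparseVec n r → ℕ)
    (x : SparseVec n r) (v : Fin m) :
    (bloomEnc hashes idx x).getD v false = decide (v ∈ bloom (hashes (idx x)) x.support) := by
  rw [bloomEnc, List.getD_append _ _ _ _ (by simp), List.getD_eq_getElem _ _ (by simp)]
  simp

lemma bloomDec_bloomEnc (hashes : ℕ → Fin n → Fin t → Fin m) {idx : SparseVec n r → ℕ}
    (hidx : ∀ x, NoFalsePositive (hashes (idx x)) x.support) (x : SparseVec n r) (j : Fin n) :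
    bloomDec hashes j (bloomEnc hashes idx x).length
      (fun i => (bloomEnc hashes idx x).getD (i - 1) false) = x.1 j := by
  simp only [bloomDec, length_bloomEnc, Nat.add_sub_cancel_left, Nat.add_sub_cancel,
    getD_bloomEnc, decide_eq_true_eq, Nat.le_add_right, true_and, ← (hidx x).mem_iff,
    SparseVec.mem_support, Bool.decide_eq_true]

def bloomCode (hashes : ℕ → Fin n → Fin t → Fin m) {idx : SparseVec n r → ℕ}
    (hidx : ∀ x, NoFalsePositive (hashes (idx x)) x.support) (htd : t ≤ d) :
    NonAdaptiveLDC r d n where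
  enc := bloomEnc hashes idx
  enc_inj x y hxy := Subtype.ext <| funext fun j => by
    rw [← bloomDec_bloomEnc hashes hidx x j, ← bloomDec_bloomEnc hashes hidx y j, hxy]
  S j ℓ := if m ≤ ℓ then univ.image fun i => (hashes (ℓ - m) j i : ℕ) + 1 else ∅
  S_sub j ℓ := by
    split_ifs with hℓ
    · intro p hp
      obtain ⟨i, -, rfl⟩ := mem_image.1 hp
      have := (hashes (ℓ - m) j i).isLt
      exact mem_Icc.2 ⟨by omega, by omega⟩
    · exact empty_subset _
  S_card j ℓ := by
    split_ifs
    · exact card_image_le.trans (by simpa using htd)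
    · simp
  g := bloomDec hashes
  g_local j ℓ f f' hff := by
    unfold bloomDec
    split_ifs at hff with hℓ
    · simp only [hℓ, true_and]
      congr 1
      exact propext <| forall_congr' fun i => by
        rw [hff _ (mem_image_of_mem _ (mem_univ i))]
    · simp [hℓ]
  correct := bloomDec_bloomEnc hashes hidx

lemma length_bloomCode_enc (hashes : ℕ → Fin n → Fin t → Fin m) {idx : SparseVec n r → ℕ}
    (hidx : ∀ x, NoFalsePositive (hashes (idx x)) x.support) (htd : t ≤ d) (x : SparseVec n r) :
    ((bloomCode hashes hidx htd).enc x).length = m + idx x :=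
  length_bloomEnc hashes idx x

end BloomCode

theorem exists_nonAdaptiveLDC_length_le_add_log_choose {n r d t m : ℕ} (htd : t ≤ d)
    (hm : 0 < m) (hcount : 2 * n * (r * t) ^ t ≤ m ^ t) :
    ∃ c : NonAdaptiveLDC r d n, ∀ x, (c.enc x).length ≤ m + Nat.log 2 (n.choose r) := by
  have : Nonempty (Fin m) := ⟨⟨0, hm⟩⟩
  obtain ⟨hashes, hcover⟩ := exists_cover_of_two_mul_card_filter_not_le
    (fun (σ : Fin n → Fin t → Fin m) (x : SparseVec n r) => NoFalsePositive σ x.support)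
    (X := univ) (k := Nat.log 2 (n.choose r) + 1)
    (fun x _ => two_mul_card_filter_not_noFalsePositive_le
      (by simpa [x.card_support] using hcount))
    (by rw [card_univ, SparseVec.card_eq_choose]; exact Nat.lt_pow_succ_log_self one_lt_two _)
  choose idx hidx_lt hidx using fun x => hcover x (mem_univ x)
  refine ⟨bloomCode hashes hidx htd, fun x => ?_⟩
  rw [length_bloomCode_enc]
  have := hidx_lt x
  omega

noncomputable def lengthCode (r d n : ℕ) : NonAdaptiveLDC r d n :=
  let e := Fintype.equivFin (SparseVec n r)
  { enc := fun x => List.replicate (e x) true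
    enc_inj := fun x y h => e.injective (Fin.ext (by simpa using congrArg List.length h))
    S := fun _ _ => ∅
    S_sub := fun _ _ => empty_subset _
    S_card := fun _ _ => by simp
    g := fun j ℓ _ =>
      if h : ℓ < Fintype.card (SparseVec n r) then (e.symm ⟨ℓ, h⟩).1 j else false
    g_local := fun _ _ _ _ _ => rfl
    correct := fun x j => by simp }

instance (r d n : ℕ) : Nonempty (NonAdaptiveLDC r d n) := ⟨lengthCode r d n⟩

lemma expLenN_le_of_forall_length_le {r d n : ℕ} (c : NonAdaptiveLDC r d n) {L : ℕ}
    (h : ∀ x, (c.enc x).length ≤ L) : expLenN c ≤ L := by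
  refine div_le_of_le_mul₀ (Nat.cast_nonneg _) (Nat.cast_nonneg _) ?_
  calc ∑ x, ((c.enc x).length : ℝ) ≤ ∑ _x : SparseVec n r, (L : ℝ) :=
        sum_le_sum fun x _ => mod_cast h x
    _ = L * n.choose r := by simp [SparseVec.card_eq_choose, mul_comm]

theorem Nat.pow_le_choose_mul_pow {n r : ℕ} (h : r ≤ n) : n ^ r ≤ n.choose r * r ^ r := by
  induction n generalizing r with
  | zero => simp [Nat.le_zero.1 h]
  | succ n ih =>
    rcases r with _ | r
    · simp
    have hr : r ≤ n := by omega
    have key : (n + 1) ^ r * r ^ r ≤ n.choose r * (r + 1) ^ r * r ^ r :=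
      calc (n + 1) ^ r * r ^ r = ((n + 1) * r) ^ r := (mul_pow _ _ _).symm
        _ ≤ (n * (r + 1)) ^ r := Nat.pow_le_pow_left (by nlinarith) r
        _ = n ^ r * (r + 1) ^ r := mul_pow _ _ _
        _ ≤ n.choose r * r ^ r * (r + 1) ^ r := Nat.mul_le_mul_right _ (ih hr)
        _ = n.choose r * (r + 1) ^ r * r ^ r := by ring
    calc (n + 1) ^ (r + 1) = (n + 1) * (n + 1) ^ r := by ring
      _ ≤ (n + 1) * (n.choose r * (r + 1) ^ r) :=
        Nat.mul_le_mul_left _ (Nat.le_of_mul_le_mul_right key Nat.pow_self_pos)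
      _ = (n + 1).choose (r + 1) * (r + 1) ^ (r + 1) := by
        rw [← mul_assoc, Nat.add_one_mul_choose_eq]; ring

lemma Nat.div_pow_le_choose {n r : ℕ} (h : r ≤ n) : ((n : ℝ) / r) ^ r ≤ n.choose r := by
  rcases r.eq_zero_or_pos with rfl | hr
  · simp
  rw [div_pow, div_le_iff₀ (by positivity)]
  exact_mod_cast Nat.pow_le_choose_mul_pow h

lemma two_mul_le_two_pow_ceil_mul_ceil {K : ℝ} (hK : 0 < K) {n : ℕ} (hn : 2 ≤ n) :
    2 * n ≤ 2 ^ (⌈2 / K⌉₊ * ⌈K * logb 2 n⌉₊) := by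
  have hn' : (2 : ℝ) ≤ n := mod_cast hn
  have hlog : 0 ≤ logb 2 n := logb_nonneg one_lt_two (by linarith)
  have hexp : logb 2 n * 2 ≤ (⌈2 / K⌉₊ * ⌈K * logb 2 n⌉₊ : ℕ) := by
    calc logb 2 n * 2 = 2 / K * (K * logb 2 n) := by field_simp
      _ ≤ ⌈2 / K⌉₊ * ⌈K * logb 2 n⌉₊ :=
        mul_le_mul (Nat.le_ceil _) (Nat.le_ceil _) (by positivity) (by positivity)
      _ = _ := by push_cast; ring
  have : (2 * n : ℝ) ≤ 2 ^ (⌈2 / K⌉₊ * ⌈K * logb 2 n⌉₊) :=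
    calc (2 * n : ℝ) ≤ (n : ℝ) ^ (2 : ℝ) := by rw [rpow_two]; nlinarith
      _ = (2 : ℝ) ^ (logb 2 n * 2) := by
        rw [rpow_mul zero_le_two, rpow_logb zero_lt_two (by norm_num) (by linarith)]
      _ ≤ (2 : ℝ) ^ ((⌈2 / K⌉₊ * ⌈K * logb 2 n⌉₊ : ℕ) : ℝ) :=
        rpow_le_rpow_of_exponent_le one_le_two hexp
      _ = _ := by rw [rpow_natCast]
  exact_mod_cast this

lemma mul_logb_div_le_logb_choose {n r : ℕ} (hr : 1 ≤ r) (hrn : r ≤ n) :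
    r * logb 2 (n / r) ≤ logb 2 (n.choose r) := by
  have hn : (0 : ℝ) < n / r := div_pos (by norm_cast; omega) (by norm_cast)
  rw [← logb_pow]
  exact logb_le_logb_of_le one_lt_two (by positivity) (Nat.div_pow_le_choose hrn)

lemma one_le_logb_choose {n r : ℕ} (hr : 1 ≤ r) (h2r : 2 * r ≤ n) :
    1 ≤ logb 2 (n.choose r) := by
  have hdiv : (2 : ℝ) ≤ n / r := by
    rw [le_div_iff₀ (by norm_cast)]; exact_mod_cast (by omega : 2 * r ≤ n)
  have hlog : 1 ≤ logb 2 (n / r) := by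
    rw [← logb_self_eq_one one_lt_two]; exact logb_le_logb_of_le one_lt_two zero_lt_two hdiv
  calc (1 : ℝ) ≤ logb 2 (n / r) := hlog
    _ ≤ r * logb 2 (n / r) := le_mul_of_one_le_left (by linarith) (mod_cast hr)
    _ ≤ _ := mul_logb_div_le_logb_choose hr (by omega)

lemma mul_logb_le_logb_choose_of_le_rpow {ε : ℝ} {n r : ℕ} (hr : 1 ≤ r) (hrn : r ≤ n)
    (hsparse : (r : ℝ) ≤ n ^ (1 - ε)) : ε * r * logb 2 n ≤ logb 2 (n.choose r) := by
  have hn : (0 : ℝ) < n := by norm_cast; omega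
  have hdiv : (n : ℝ) ^ ε ≤ n / r := by
    rw [le_div_iff₀ (by norm_cast)]
    calc (n : ℝ) ^ ε * r ≤ n ^ ε * n ^ (1 - ε) := by gcongr
      _ = n := by rw [← rpow_add hn]; simp
  calc ε * r * logb 2 n = r * logb 2 ((n : ℝ) ^ ε) := by
        rw [logb_rpow_eq_mul_logb_of_pos hn]; ring
    _ ≤ r * logb 2 (n / r) := by gcongr; exact one_lt_two
    _ ≤ _ := mul_logb_div_le_logb_choose hr hrn

theorem exists_nonAdaptiveLDC_expLenN_div_logb_choose_le {ε K : ℝ} (hε : 0 < ε) (hK : 0 < K)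
    {n r d : ℕ} (hn : 2 ≤ n) (hr : 1 ≤ r) (h2r : 2 * r ≤ n) (hsparse : (r : ℝ) ≤ n ^ (1 - ε))
    (hd : K * logb 2 n ≤ d) :
    ∃ c : NonAdaptiveLDC r d n,
      expLenN c / logb 2 (n.choose r) ≤ 2 ^ ⌈2 / K⌉₊ * (K + 1) / ε + 1 := by
  have hlogn : 1 ≤ logb 2 n := by
    rw [← logb_self_eq_one one_lt_two]
    exact logb_le_logb_of_le one_lt_two zero_lt_two (mod_cast hn)
  set t := ⌈K * logb 2 n⌉₊
  set m := 2 ^ ⌈2 / K⌉₊ * (r * t)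
  have ht : 0 < t := Nat.ceil_pos.2 (by positivity)
  have hcount : 2 * n * (r * t) ^ t ≤ m ^ t := by
    rw [show m ^ t = 2 ^ (⌈2 / K⌉₊ * t) * (r * t) ^ t by rw [mul_pow, pow_mul]]
    exact Nat.mul_le_mul_right _ (two_mul_le_two_pow_ceil_mul_ceil hK hn)
  obtain ⟨c, hc⟩ :=
    exists_nonAdaptiveLDC_length_le_add_log_choose (Nat.ceil_le.2 hd) (by positivity) hcount
  refine ⟨c, ?_⟩
  have hC := one_le_logb_choose hr h2r
  have hm : (m : ℝ) ≤ 2 ^ ⌈2 / K⌉₊ * (K + 1) / ε * logb 2 (n.choose r) := by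
    have ht' : (t : ℝ) ≤ (K + 1) * logb 2 n := by
      linarith [(Nat.ceil_lt_add_one (by positivity : 0 ≤ K * logb 2 n)).le]
    calc (m : ℝ) = 2 ^ ⌈2 / K⌉₊ * (r * t) := by push_cast [m]; ring
      _ ≤ 2 ^ ⌈2 / K⌉₊ * (r * ((K + 1) * logb 2 n)) := by gcongr
      _ = 2 ^ ⌈2 / K⌉₊ * (K + 1) / ε * (ε * r * logb 2 n) := by field_simp
      _ ≤ _ := by gcongr; exact mul_logb_le_logb_choose_of_le_rpow hr (by omega) hsparse
  rw [div_le_iff₀ (by linarith)]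
  calc expLenN c ≤ ((m + Nat.log 2 (n.choose r) : ℕ) : ℝ) :=
        expLenN_le_of_forall_length_le c hc
    _ ≤ m + logb 2 (n.choose r) := by push_cast; gcongr; exact natLog_le_logb _ _
    _ ≤ _ := by linarith

/-- Corollary 2 ("if" direction): if `rₙ ≤ n^{1−ε}` and `dₙ ≥ K log₂ n` for large `n`,
then there exists a competitively optimal sequence of non-adaptive
`(rₙ,dₙ,n)`-locally decodable codes, i.e. a sequence for which
`E[ℓ(cₙ(Xⁿ))] / log₂ C(n,rₙ)` is eventually bounded above (finite limsup). -/
theorem competitively_optimal_sparse_sufficient (ε K : ℝ) (hε : 0 < ε) (hK : 0 < K)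
    (r d : ℕ → ℕ)
    (hpos : ∀ n, 2 ≤ n → 1 ≤ r n ∧ 2 * r n ≤ n ∧ 1 ≤ d n)
    (hsparse : ∀ᶠ n : ℕ in atTop, (r n : ℝ) ≤ (n : ℝ) ^ (1 - ε))
    (hd : ∀ᶠ n : ℕ in atTop, (d n : ℝ) ≥ K * Real.logb 2 n) :
    ∃ c : ∀ n, NonAdaptiveLDC (r n) (d n) n,
      IsBoundedUnder (· ≤ ·) atTop
        (fun n => expLenN (c n) / Real.logb 2 (n.choose (r n))) := by
  have hcode : ∀ n, ∃ c : NonAdaptiveLDC (r n) (d n) n,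
      2 ≤ n → (r n : ℝ) ≤ (n : ℝ) ^ (1 - ε) → K * logb 2 n ≤ d n →
        expLenN c / logb 2 (n.choose (r n)) ≤ 2 ^ ⌈2 / K⌉₊ * (K + 1) / ε + 1 := by
    intro n
    by_cases h : 2 ≤ n ∧ (r n : ℝ) ≤ (n : ℝ) ^ (1 - ε) ∧ K * logb 2 n ≤ d n
    · obtain ⟨hr, h2r, -⟩ := hpos n h.1
      obtain ⟨c, hc⟩ :=
        exists_nonAdaptiveLDC_expLenN_div_logb_choose_le hε hK h.1 hr h2r h.2.1 h.2.2
      exact ⟨c, fun _ _ _ => hc⟩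
    · exact ⟨Classical.arbitrary _, fun h1 h2 h3 => absurd ⟨h1, h2, h3⟩ h⟩
  choose c hc using hcode
  exact ⟨c, isBoundedUnder_of_eventually_le <| by
    filter_upwards [eventually_ge_atTop 2, hsparse, hd] with n hn hrn hdn using hc n hn hrn hdn⟩
end

section
/- Let c be an adaptive (r,d,n)-locally decodable source code for positive integers 1 ≤ r ≤ n/2 and d ≥ 1. Then for every positive integer k, the number of r-sparse binary vectors x of length n whose codeword c(x) has length exactly k is at most max_{0 ≤ v ≤ rd} C(2k, v), where C(2k,v) is the binomial coefficient 2k choose v. -/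
open Filter MeasureTheory

/-- An adaptive `(r,d,n)`-locally decodable source code. -/
structure AdaptiveLDC (r d n : ℕ) where
  enc : SparseVec n r → List Bool
  enc_inj : Function.Injective enc
  tree : Fin n → ℕ → DTree
  depth_le : ∀ j ℓ, (tree j ℓ).depth ≤ d
  bounded : ∀ j ℓ, (tree j ℓ).boundedBy ℓ
  correct : ∀ x (j : Fin n), (tree j (enc x).length).eval (enc x) = x.1 j

/-- Expected codeword length under the uniform distribution on `r`-sparse vectors. -/
noncomputable def expLenA {r d n : ℕ} (c : AdaptiveLDC r d n) : ℝ :=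
  (∑ x : SparseVec n r, ((c.enc x).length : ℝ)) / (n.choose r : ℝ)

/-! Decoding the one-coordinates of an `r`-sparse `x` from its length-`k` codeword reads at most
`r * d` positions, and the bits at these positions already force every one-coordinate of `x`
(the decision trees follow the same paths on any codeword agreeing there). Padding the set of
read positions to exactly `min (r * d) k` positions of `{1, …, k}`, the map sending `x` to its
codeword's bits on that set is an injection into the `min (r * d) k`-subsets of
`{1, …, k} × Bool`. -/

namespace DTree

/-- The positions probed along the path that `w` takes through the tree. -/
def probes (w : List Bool) : DTree → Finset ℕ
  | leaf _ => ∅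
  | node p l h => insert p (if w.getD (p - 1) false then h.probes w else l.probes w)

theorem card_probes_le (w : List Bool) (t : DTree) : (t.probes w).card ≤ t.depth := by
  induction t with
  | leaf => simp [probes, depth]
  | node p l h ihl ihh =>
    simp only [probes, depth]
    refine (Finset.card_insert_le _ _).trans ?_
    split <;> omega

theorem probes_subset_Icc {ℓ : ℕ} {t : DTree} (ht : t.boundedBy ℓ) (w : List Bool) :
    t.probes w ⊆ Finset.Icc 1 ℓ := by
  induction t with
  | leaf => simp [probes]
  | node p l h ihl ihh =>
    obtain ⟨hp1, hpℓ, hl, hh⟩ := ht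
    refine Finset.insert_subset (Finset.mem_Icc.mpr ⟨hp1, hpℓ⟩) ?_
    split
    · exact ihh hh
    · exact ihl hl

theorem eval_eq_of_agree {w w' : List Bool} {t : DTree}
    (h : ∀ p ∈ t.probes w, w'.getD (p - 1) false = w.getD (p - 1) false) :
    t.eval w' = t.eval w := by
  induction t with
  | leaf => rfl
  | node p l hi ihl ihh =>
    have hp := h p (Finset.mem_insert_self _ _)
    have hrest := fun q hq => h q (Finset.mem_insert_of_mem hq)
    simp only [eval, hp]
    split
    · next hb => exact ihh (by rwa [if_pos hb] at hrest)
    · next hb => exact ihl (by rwa [if_neg hb] at hrest)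

end DTree

/-- The bits of `w` at the (1-indexed) positions in `V`, as a set of position–bit pairs. -/
def bitsOn (w : List Bool) (V : Finset ℕ) : Finset (ℕ × Bool) :=
  V.image fun p => (p, w.getD (p - 1) false)

theorem card_bitsOn (w : List Bool) (V : Finset ℕ) : (bitsOn w V).card = V.card :=
  Finset.card_image_of_injective _ fun _ _ h => congrArg Prod.fst h

theorem bitsOn_subset_product {w : List Bool} {V s : Finset ℕ} (hV : V ⊆ s) :
    bitsOn w V ⊆ s ×ˢ Finset.univ := by
  intro q hq
  obtain ⟨p, hp, rfl⟩ := Finset.mem_image.mp hq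
  exact Finset.mem_product.mpr ⟨hV hp, Finset.mem_univ _⟩

theorem bitsOn_eq_bitsOn_iff {w w' : List Bool} {V V' : Finset ℕ} :
    bitsOn w V = bitsOn w' V' ↔
      V = V' ∧ ∀ p ∈ V, w.getD (p - 1) false = w'.getD (p - 1) false := by
  constructor
  · intro h
    have hV : V = V' := by
      simpa [bitsOn, Finset.image_image, Function.comp_def] using congrArg (·.image Prod.fst) h
    subst hV
    refine ⟨rfl, fun p hp => ?_⟩
    have hmem : (p, w.getD (p - 1) false) ∈ bitsOn w' V := h ▸ Finset.mem_image_of_mem _ hp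
    obtain ⟨q, -, hq⟩ := Finset.mem_image.mp hmem
    obtain ⟨rfl, hbit⟩ := Prod.mk.injEq _ _ _ _ ▸ hq
    exact hbit.symm
  · rintro ⟨rfl, hagree⟩
    exact Finset.image_congr fun p hp => by rw [hagree p hp]

namespace AdaptiveLDC

variable {r d n : ℕ} (c : AdaptiveLDC r d n) (k : ℕ)

/-- The positions of a length-`k` codeword read when decoding the one-coordinates of `x`. -/
def support (x : SparseVec n r) : Finset ℕ :=
  (Finset.univ.filter fun j => x.1 j = true).biUnion fun j => (c.tree j k).probes (c.enc x)

theorem support_subset_Icc (x : SparseVec n r) : c.support k x ⊆ Finset.Icc 1 k :=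
  Finset.biUnion_subset.mpr fun j _ => DTree.probes_subset_Icc (c.bounded j k) _

theorem card_support_le (x : SparseVec n r) : (c.support k x).card ≤ r * d := by
  have hones : (Finset.univ.filter fun j => x.1 j = true).card = r := x.2
  calc (c.support k x).card
      ≤ ∑ j ∈ Finset.univ.filter (fun j => x.1 j = true), ((c.tree j k).probes (c.enc x)).card :=
        Finset.card_biUnion_le
    _ ≤ ∑ _j ∈ Finset.univ.filter (fun j => x.1 j = true), d :=
        Finset.sum_le_sum fun j _ => (DTree.card_probes_le _ _).trans (c.depth_le j k)
    _ = r * d := by rw [Finset.sum_const, hones, smul_eq_mul]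

variable {c k}

theorem apply_eq_true_of_agree {x y : SparseVec n r} (hx : (c.enc x).length = k)
    (hy : (c.enc y).length = k)
    (hagree : ∀ p ∈ c.support k x, (c.enc y).getD (p - 1) false = (c.enc x).getD (p - 1) false)
    {j : Fin n} (hj : x.1 j = true) : y.1 j = true := by
  have hprobes : (c.tree j k).probes (c.enc x) ⊆ c.support k x :=
    Finset.subset_biUnion_of_mem (fun j => (c.tree j k).probes (c.enc x)) (by simpa using hj)
  rw [← c.correct y j, hy, DTree.eval_eq_of_agree fun p hp => hagree p (hprobes hp), ← hx,
    c.correct x j, hj]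

theorem eq_of_bitsOn_eq {x y : SparseVec n r} (hx : (c.enc x).length = k)
    (hy : (c.enc y).length = k) {V W : Finset ℕ} (hxV : c.support k x ⊆ V)
    (hyW : c.support k y ⊆ W) (h : bitsOn (c.enc x) V = bitsOn (c.enc y) W) : x = y := by
  obtain ⟨rfl, hagree⟩ := bitsOn_eq_bitsOn_iff.mp h
  have hxy : ∀ j, x.1 j = true → y.1 j = true := fun _ =>
    apply_eq_true_of_agree hx hy fun p hp => (hagree p (hxV hp)).symm
  have hyx : ∀ j, y.1 j = true → x.1 j = true := fun _ =>
    apply_eq_true_of_agree hy hx fun p hp => hagree p (hyW hp)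
  exact Subtype.ext (funext fun j => Bool.eq_iff_iff.mpr ⟨hxy j, hyx j⟩)

variable (c k)

theorem card_filter_length_eq_le_choose :
    (Finset.univ.filter fun x : SparseVec n r => (c.enc x).length = k).card ≤
      (2 * k).choose (min (r * d) k) := by
  have hsupp_le : ∀ x, (c.support k x).card ≤ min (r * d) k := fun x =>
    le_min (c.card_support_le k x)
      ((Finset.card_le_card (c.support_subset_Icc k x)).trans_eq (Nat.card_Icc 1 k))
  choose V hsuppV hVIcc hVcard using fun x =>
    Finset.exists_subsuperset_card_eq (c.support_subset_Icc k x) (hsupp_le x)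
      (by simp : min (r * d) k ≤ (Finset.Icc 1 k).card)
  calc _ ≤ ((Finset.Icc 1 k ×ˢ (Finset.univ : Finset Bool)).powersetCard (min (r * d) k)).card := by
        refine Finset.card_le_card_of_injOn (fun x => bitsOn (c.enc x) (V x)) (fun x _ => ?_)
          (fun x hx y hy h => ?_)
        · exact Finset.mem_powersetCard.mpr
            ⟨bitsOn_subset_product (hVIcc x), (card_bitsOn _ _).trans (hVcard x)⟩
        · exact eq_of_bitsOn_eq (Finset.mem_filter.mp hx).2 (Finset.mem_filter.mp hy).2
            (hsuppV x) (hsuppV y) h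
    _ = (2 * k).choose (min (r * d) k) := by
        simp [Finset.card_powersetCard, Finset.card_product, mul_comm]

end AdaptiveLDC

theorem codewords_per_length_bound_general (r d n : ℕ)
    (c : AdaptiveLDC r d n) (k : ℕ) :
    (Finset.univ.filter fun x : SparseVec n r => (c.enc x).length = k).card ≤
      (Finset.range (r * d + 1)).sup fun v => (2 * k).choose v :=
  (c.card_filter_length_eq_le_choose k).trans
    (Finset.le_sup (f := fun v => (2 * k).choose v) (Finset.mem_range.mpr (by omega)))

/-- The number of `r`-sparse source vectors whose codeword has length exactly `k` is at
most `max_{0 ≤ v ≤ rd} C(2k, v)`. -/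
theorem codewords_per_length_bound (r d n : ℕ) (hr : 1 ≤ r) (hd : 1 ≤ d) (hrn : 2 * r ≤ n)
    (c : AdaptiveLDC r d n) (k : ℕ) (hk : 1 ≤ k) :
    (Finset.univ.filter fun x : SparseVec n r => (c.enc x).length = k).card ≤
      (Finset.range (r * d + 1)).sup fun v => (2 * k).choose v :=
  codewords_per_length_bound_general r d n c k
end

section
/- Let U be a finite set of cardinality u, and let 𝒜 be a family of subsets of U such that no member of 𝒜 is a subset of another member, and every member of 𝒜 has cardinality at most v. Then |𝒜| ≤ max_{0 ≤ i ≤ v} C(u, i), where C(u,i) is the binomial coefficient u choose i. -/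
/-!
By the LYM inequality, `∑_{s ∈ 𝒜} 1 / C(u, #s) ≤ 1` for an antichain `𝒜` of subsets of a
`u`-element set. When every member has at most `v` elements, each term is at least `1 / M` with
`M = max_{i ≤ v} C(u, i)`, so `#𝒜 ≤ M`. Subsets of `U` are handled by pulling `𝒜` back along the
order embedding `Finset U ↪o Finset α`.
-/

open Finset

theorem IsAntichain.card_le_sup_choose {α : Type*} [Fintype α] {𝒜 : Finset (Finset α)} {v : ℕ}
    (h𝒜 : IsAntichain (· ⊆ ·) (𝒜 : Set (Finset α))) (hcard : ∀ s ∈ 𝒜, #s ≤ v) :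
    #𝒜 ≤ (range (v + 1)).sup fun i => (Fintype.card α).choose i := by
  set M := (range (v + 1)).sup fun i => (Fintype.card α).choose i
  have choose_le_M {r : ℕ} (hr : r ≤ v) : (Fintype.card α).choose r ≤ M :=
    le_sup (f := fun i => (Fintype.card α).choose i) (mem_range_succ_iff.2 hr)
  have hM : 0 < (M : ℚ≥0) :=
    Nat.cast_pos.2 (show 1 ≤ M by simpa using choose_le_M v.zero_le)
  have h := calc
    ∑ _s ∈ 𝒜, (M : ℚ≥0)⁻¹
    _ ≤ ∑ s ∈ 𝒜, ((Fintype.card α).choose #s : ℚ≥0)⁻¹ := by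
      gcongr with s hs
      · exact mod_cast Nat.choose_pos s.card_le_univ
      · exact choose_le_M (hcard s hs)
    _ ≤ 1 := lubell_yamamoto_meshalkin_inequality_sum_inv_choose h𝒜
  simpa [mul_inv_le_iff₀' hM] using h

theorem antichain_card_le_general {α : Type*} (U : Finset α)
    (𝒜 : Finset (Finset α)) (v : ℕ)
    (hsub : ∀ A ∈ 𝒜, A ⊆ U)
    (hanti : IsAntichain (· ⊆ ·) (𝒜 : Set (Finset α)))
    (hcard : ∀ A ∈ 𝒜, A.card ≤ v) :
    𝒜.card ≤ (Finset.range (v + 1)).sup fun i => U.card.choose i := by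
  classical
  set ι : Finset U ↪o Finset α := mapEmbedding (Function.Embedding.subtype (· ∈ U))
  have hrange : ∀ A ∈ 𝒜, A ∈ Set.range ι := fun A hA =>
    ⟨A.subtype (· ∈ U), by simpa [ι] using subtype_map_of_mem (hsub A hA)⟩
  set 𝒜' := 𝒜.preimage ι ι.injective.injOn
  have hcard' : #𝒜' = #𝒜 := by
    rw [card_preimage, filter_true_of_mem hrange]
  rw [← hcard', ← Fintype.card_coe U]
  refine IsAntichain.card_le_sup_choose ?_ fun s hs => ?_
  · rw [coe_preimage]
    exact hanti.preimage ι.injective fun _ _ => ι.le_iff_le.2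
  · rw [mem_preimage] at hs
    simpa [ι] using hcard _ hs

/-- A consequence of the LYM inequality: an antichain of subsets of a `u`-element set,
all of cardinality at most `v`, has at most `max_{0 ≤ i ≤ v} C(u, i)` members. -/
theorem antichain_card_le {α : Type*} [DecidableEq α] (U : Finset α)
    (𝒜 : Finset (Finset α)) (v : ℕ)
    (hsub : ∀ A ∈ 𝒜, A ⊆ U)
    (hanti : IsAntichain (· ⊆ ·) (𝒜 : Set (Finset α)))
    (hcard : ∀ A ∈ 𝒜, A.card ≤ v) :
    𝒜.card ≤ (Finset.range (v + 1)).sup fun i => U.card.choose i :=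
  antichain_card_le_general U 𝒜 v hsub hanti hcard
end

section
/- For all positive integers v and M with M ≥ v + 1: the sum over k from 1 to M of max_{0 ≤ i ≤ v} C(2k, i) is at most 2^v · (M+2)^{v+1} / (v+1)!, where C(2k,i) is the binomial coefficient 2k choose i. -/
/-!
For `k ≥ v` the maximum is `C(2k, v) ≤ (2k)^v / v!`, and `(v+1) ∑_{k ≤ M} k^v ≤ (M+1)^(v+1)`.
For `k ≤ v` we only use `C(2k, i) ≤ 4^k`: the geometric sum times `(v+1)!` is at most
`2^v (v+1) (v+2)^v ≤ 2^v (v+1) (M+1)^v`, and the two pieces fit under `2^v (M+2)^(v+1)` by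
Bernoulli's inequality `(M+1)^(v+1) + (v+1) (M+1)^v ≤ (M+2)^(v+1)`.
-/

open Finset
open scoped Nat

lemma pow_succ_add_mul_pow_le (n m : ℕ) : n ^ (m + 1) + (m + 1) * n ^ m ≤ (n + 1) ^ (m + 1) := by
  simpa using pow_add_mul_le_add_pow (a := n) (b := 1) (Nat.zero_le _) (Nat.zero_le _) (m + 1)

lemma succ_mul_sum_range_pow_le (v N : ℕ) : (v + 1) * ∑ k ∈ range N, k ^ v ≤ N ^ (v + 1) := by
  induction N with
  | zero => simp
  | succ N ih =>
    rw [sum_range_succ, Nat.mul_add]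
    exact (Nat.add_le_add_right ih _).trans (pow_succ_add_mul_pow_le N v)

lemma three_mul_sum_range_four_pow_lt (n : ℕ) : 3 * ∑ k ∈ range n, 4 ^ k < 4 ^ n := by
  have := geom_sum_mul_add 3 n
  norm_num at this
  omega

lemma factorial_mul_four_pow_le {v : ℕ} (hv : 1 ≤ v) :
    v ! * 4 ^ (v + 1) ≤ 3 * 2 ^ v * (v + 2) ^ v := by
  induction v, hv using Nat.le_induction with
  | base => norm_num
  | succ v _ ih =>
    have hstep : 2 * (v + 1) * (v + 2) ^ v ≤ (v + 3) ^ (v + 1) :=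
      calc 2 * (v + 1) * (v + 2) ^ v ≤ (v + 2 + (v + 1)) * (v + 2) ^ v :=
            Nat.mul_le_mul_right _ (by omega)
        _ = (v + 2) ^ (v + 1) + (v + 1) * (v + 2) ^ v := by ring
        _ ≤ (v + 3) ^ (v + 1) := pow_succ_add_mul_pow_le (v + 2) v
    calc (v + 1)! * 4 ^ (v + 1 + 1) = 4 * (v + 1) * (v ! * 4 ^ (v + 1)) := by
          rw [Nat.factorial_succ]; ring
      _ ≤ 4 * (v + 1) * (3 * 2 ^ v * (v + 2) ^ v) := Nat.mul_le_mul_left _ ih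
      _ = 3 * 2 ^ (v + 1) * (2 * (v + 1) * (v + 2) ^ v) := by ring
      _ ≤ 3 * 2 ^ (v + 1) * (v + 1 + 2) ^ (v + 1) := Nat.mul_le_mul_left _ hstep

lemma choose_le_choose_of_le_half {n i j : ℕ} (hij : i ≤ j) (hj : j ≤ n / 2) :
    n.choose i ≤ n.choose j := by
  induction j, hij using Nat.le_induction with
  | base => exact le_rfl
  | succ j _ ih => exact (ih (by omega)).trans (Nat.choose_le_succ_of_lt_half_left (by omega))

def maxChoose (v n : ℕ) : ℕ := (range (v + 1)).sup n.choose

lemma maxChoose_le_two_pow (v n : ℕ) : maxChoose v n ≤ 2 ^ n :=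
  Finset.sup_le fun i _ => Nat.choose_le_two_pow n i

lemma maxChoose_eq_choose {v n : ℕ} (h : 2 * v ≤ n) : maxChoose v n = n.choose v :=
  le_antisymm
    (Finset.sup_le fun i hi => choose_le_choose_of_le_half (by simpa [Nat.lt_succ_iff] using hi)
      (by omega))
    (le_sup (f := n.choose) (self_mem_range_succ v))

lemma factorial_mul_maxChoose_le {v n : ℕ} (h : 2 * v ≤ n) : v ! * maxChoose v n ≤ n ^ v := by
  rw [maxChoose_eq_choose h, ← Nat.descFactorial_eq_factorial_mul_choose]
  exact Nat.descFactorial_le_pow n v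

lemma sum_maxChoose_mul_factorial_le_of_subset_Iic {v : ℕ} (hv : 1 ≤ v) {s : Finset ℕ}
    (hs : s ⊆ Iic v) :
    (∑ k ∈ s, maxChoose v (2 * k)) * (v + 1)! ≤ 2 ^ v * ((v + 1) * (v + 2) ^ v) := by
  have hsum : ∑ k ∈ s, maxChoose v (2 * k) ≤ ∑ k ∈ range (v + 1), 4 ^ k :=
    calc ∑ k ∈ s, maxChoose v (2 * k) ≤ ∑ k ∈ s, 4 ^ k :=
          sum_le_sum fun k _ => by simpa [pow_mul] using maxChoose_le_two_pow v (2 * k)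
      _ ≤ ∑ k ∈ range (v + 1), 4 ^ k :=
          sum_le_sum_of_subset (hs.trans fun k hk => by simpa [Nat.lt_succ_iff] using hk)
  suffices 3 * ((∑ k ∈ s, maxChoose v (2 * k)) * (v + 1)!) ≤
      3 * (2 ^ v * ((v + 1) * (v + 2) ^ v)) by omega
  calc 3 * ((∑ k ∈ s, maxChoose v (2 * k)) * (v + 1)!)
      ≤ (3 * ∑ k ∈ range (v + 1), 4 ^ k) * (v + 1)! := by
        rw [← mul_assoc]; exact Nat.mul_le_mul_right _ (Nat.mul_le_mul_left 3 hsum)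
    _ ≤ 4 ^ (v + 1) * (v + 1)! := by gcongr; exact (three_mul_sum_range_four_pow_lt _).le
    _ = (v + 1) * (v ! * 4 ^ (v + 1)) := by rw [Nat.factorial_succ]; ring
    _ ≤ (v + 1) * (3 * 2 ^ v * (v + 2) ^ v) :=
        Nat.mul_le_mul_left _ (factorial_mul_four_pow_le hv)
    _ = 3 * (2 ^ v * ((v + 1) * (v + 2) ^ v)) := by ring

lemma sum_maxChoose_mul_factorial_le_of_subset_Icc {v M : ℕ} {s : Finset ℕ}
    (hs : s ⊆ Icc v M) :
    (∑ k ∈ s, maxChoose v (2 * k)) * (v + 1)! ≤ 2 ^ v * (M + 1) ^ (v + 1) :=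
  calc (∑ k ∈ s, maxChoose v (2 * k)) * (v + 1)!
      = (v + 1) * ∑ k ∈ s, v ! * maxChoose v (2 * k) := by
        rw [Nat.factorial_succ, ← mul_sum]; ring
    _ ≤ (v + 1) * ∑ k ∈ s, 2 ^ v * k ^ v := by
        refine Nat.mul_le_mul_left _ (sum_le_sum fun k hk => ?_)
        rw [← mul_pow]
        exact factorial_mul_maxChoose_le (by have := hs hk; simp at this; omega)
    _ = 2 ^ v * ((v + 1) * ∑ k ∈ s, k ^ v) := by rw [← mul_sum]; ring
    _ ≤ 2 ^ v * ((v + 1) * ∑ k ∈ range (M + 1), k ^ v) := by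
        gcongr
        exact hs.trans fun k hk => by simp at hk ⊢; omega
    _ ≤ 2 ^ v * (M + 1) ^ (v + 1) := by gcongr; exact succ_mul_sum_range_pow_le v (M + 1)

lemma sum_Icc_maxChoose_mul_factorial_le {v M : ℕ} (hv : 1 ≤ v) (hM : v + 1 ≤ M) :
    (∑ k ∈ Icc 1 M, maxChoose v (2 * k)) * (v + 1)! ≤ 2 ^ v * (M + 2) ^ (v + 1) := by
  rw [← sum_filter_add_sum_filter_not (Icc 1 M) (· ≤ v), add_mul]
  have hsmall := sum_maxChoose_mul_factorial_le_of_subset_Iic hv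
    (s := (Icc 1 M).filter (· ≤ v)) fun k hk => by simp at hk ⊢; omega
  have hlarge := sum_maxChoose_mul_factorial_le_of_subset_Icc (v := v) (M := M)
    (s := (Icc 1 M).filter fun k => ¬k ≤ v) fun k hk => by simp at hk ⊢; omega
  have hM' : (v + 2) ^ v ≤ (M + 1) ^ v := Nat.pow_le_pow_left (by omega) v
  calc _ ≤ 2 ^ v * ((v + 1) * (M + 1) ^ v) + 2 ^ v * (M + 1) ^ (v + 1) :=
        add_le_add (hsmall.trans (Nat.mul_le_mul_left _ (Nat.mul_le_mul_left _ hM'))) hlarge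
    _ = 2 ^ v * ((M + 1) ^ (v + 1) + (v + 1) * (M + 1) ^ v) := by ring
    _ ≤ 2 ^ v * (M + 2) ^ (v + 1) := by gcongr; exact pow_succ_add_mul_pow_le (M + 1) v

/-- For `v ≥ 1` and `M ≥ v + 1`,
`∑_{k=1}^{M} max_{0 ≤ i ≤ v} C(2k, i) ≤ 2^v (M+2)^{v+1} / (v+1)!`. -/
theorem sum_max_binom_le_of_large (v M : ℕ) (hv : 1 ≤ v) (hM : v + 1 ≤ M) :
    (∑ k ∈ Finset.Icc 1 M,
        (((Finset.range (v + 1)).sup fun i => (2 * k).choose i : ℕ) : ℝ)) ≤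
      2 ^ v * ((M : ℝ) + 2) ^ (v + 1) / (Nat.factorial (v + 1) : ℝ) := by
  rw [le_div_iff₀ (by positivity)]
  exact_mod_cast sum_Icc_maxChoose_mul_factorial_le hv hM
end

section
/- Let n, r, d, M be positive integers with r ≤ n/2. If the sum over k from 1 to M+1 of max_{0 ≤ i ≤ rd} C(2k, i) is strictly greater than C(n, r), then M + 3 ≥ ((rd+1)/(2e)) · ( C(n,r)^{1/(rd+1)} − 1 ), where C(m,i) denotes the binomial coefficient m choose i and e is Euler's number. -/
/-!
With `s = rd + 1` and `N = 2M + 3`, bound each maximum `max_{i < s} C(2k, i)` by the partial sum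
`∑_{i < s} C(2k, i)`; summing over `k` and using the hockey-stick identity, the hypothesis gives
`C(n, r) < B := ∑_{j ≤ s} C(N, j)`. If `s ≤ N`, comparing `B (s/N)^s` with `(1 + s/N)^N ≤ e^s`
gives `B ≤ (eN/s)^s`; if `s > N`, then `B ≤ 2^N`, and Bernoulli's inequality with the real exponent
`s/N` bounds this. In both cases `C(n, r) ≤ (1 + t)^s` for `t = 2e(M+3)/s`, and taking `s`-th roots
gives the claim.
-/

open Finset Real

lemma sum_range_choose_eq_choose_add_one (N i : ℕ) : ∑ m ∈ range N, m.choose i = N.choose (i + 1) := by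
  induction N with
  | zero => simp
  | succ N ih => rw [sum_range_succ, ih, Nat.choose_succ_succ', add_comm]

lemma sum_Icc_sum_range_choose_two_mul_le (M s : ℕ) :
    ∑ k ∈ Icc 1 (M + 1), ∑ i ∈ range s, (2 * k).choose i ≤
      ∑ j ∈ range (s + 1), (2 * M + 3).choose j :=
  calc ∑ k ∈ Icc 1 (M + 1), ∑ i ∈ range s, (2 * k).choose i
      = ∑ m ∈ (Icc 1 (M + 1)).image (2 * ·), ∑ i ∈ range s, m.choose i := by
        rw [sum_image fun _ _ _ _ h => by simpa using h]
    _ ≤ ∑ m ∈ range (2 * M + 3), ∑ i ∈ range s, m.choose i :=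
        sum_le_sum_of_subset fun m => by simp only [mem_image, mem_Icc, mem_range]; omega
    _ = ∑ i ∈ range s, (2 * M + 3).choose (i + 1) := by
        rw [sum_comm]; simp only [sum_range_choose_eq_choose_add_one]
    _ ≤ ∑ j ∈ range (s + 1), (2 * M + 3).choose j := by
        rw [sum_range_succ']; exact Nat.le_add_right _ _

lemma sum_range_choose_mul_pow_le_one_add_pow {x : ℝ} (hx : 0 ≤ x) (K N : ℕ) :
    ∑ j ∈ range K, (N.choose j : ℝ) * x ^ j ≤ (1 + x) ^ N :=
  calc ∑ j ∈ range K, (N.choose j : ℝ) * x ^ j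
      ≤ ∑ j ∈ range (max K (N + 1)), (N.choose j : ℝ) * x ^ j :=
        sum_le_sum_of_subset_of_nonneg (range_mono (le_max_left _ _)) fun _ _ _ => by positivity
    _ = ∑ j ∈ range (N + 1), (N.choose j : ℝ) * x ^ j := by
        refine (sum_subset (range_mono (le_max_right _ _)) fun j _ hj => ?_).symm
        rw [Nat.choose_eq_zero_of_lt (by simpa using hj), Nat.cast_zero, zero_mul]
    _ = (1 + x) ^ N := by simp [add_comm 1 x, add_pow, mul_comm]

lemma sum_range_choose_mul_pow_le {x : ℝ} (hx₀ : 0 ≤ x) (hx₁ : x ≤ 1) (s N : ℕ) :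
    (∑ j ∈ range (s + 1), (N.choose j : ℝ)) * x ^ s ≤ (1 + x) ^ N := by
  rw [sum_mul]
  refine (sum_le_sum fun j hj => ?_).trans (sum_range_choose_mul_pow_le_one_add_pow hx₀ _ N)
  exact mul_le_mul_of_nonneg_left
    (pow_le_pow_of_le_one hx₀ hx₁ (Nat.lt_succ_iff.mp (mem_range.mp hj))) (Nat.cast_nonneg _)

lemma sum_range_choose_le_exp_mul_div_pow {s N : ℕ} (hs : 0 < s) (hsN : s ≤ N) :
    ∑ j ∈ range (s + 1), (N.choose j : ℝ) ≤ (exp 1 * N / s) ^ s := by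
  have hs' : (0 : ℝ) < s := by exact_mod_cast hs
  have hN : (0 : ℝ) < N := by exact_mod_cast hs.trans_le hsN
  have hx : (s : ℝ) / N ≤ 1 := div_le_one_of_le₀ (by exact_mod_cast hsN) hN.le
  have key := sum_range_choose_mul_pow_le (by positivity) hx s N
  have hexp : (1 + (s : ℝ) / N) ^ N ≤ exp 1 ^ s := by
    calc (1 + (s : ℝ) / N) ^ N ≤ exp ((s : ℝ) / N) ^ N := by
          gcongr; linarith [add_one_le_exp ((s : ℝ) / N)]
      _ = exp 1 ^ s := by rw [← exp_nat_mul, ← exp_nat_mul]; field_simp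
  rw [show exp 1 * N / s = exp 1 / (s / N) by field_simp, div_pow, le_div_iff₀ (by positivity)]
  exact key.trans hexp

lemma two_pow_le_one_add_pow {N s : ℕ} (hNs : N ≤ s) {t : ℝ} (ht : 0 ≤ t) (h : N ≤ s * t) :
    (2 : ℝ) ^ N ≤ (1 + t) ^ s := by
  rcases N.eq_zero_or_pos with rfl | hN
  · simpa using one_le_pow₀ (by linarith : (1 : ℝ) ≤ 1 + t)
  have hN' : (0 : ℝ) < N := by exact_mod_cast hN
  have hp : (1 : ℝ) ≤ s / N := (one_le_div hN').mpr (by exact_mod_cast hNs)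
  have two_le : 2 ≤ (1 + t) ^ ((s : ℝ) / N) := by
    have hbernoulli := one_add_mul_self_le_rpow_one_add (by linarith : (-1 : ℝ) ≤ t) hp
    have hst : 1 ≤ (s : ℝ) / N * t := by rw [div_mul_eq_mul_div, one_le_div hN']; exact h
    linarith
  calc (2 : ℝ) ^ N ≤ ((1 + t) ^ ((s : ℝ) / N)) ^ N := by gcongr
    _ = (1 + t) ^ s := by
      rw [← rpow_natCast _ N, ← rpow_mul (by linarith), div_mul_cancel₀ _ hN'.ne', rpow_natCast]

lemma sum_range_choose_le_one_add_pow {s N : ℕ} (hs : 0 < s) {t : ℝ} (ht : 0 ≤ t)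
    (h : exp 1 * N ≤ s * t) : ∑ j ∈ range (s + 1), (N.choose j : ℝ) ≤ (1 + t) ^ s := by
  have hs' : (0 : ℝ) < s := by exact_mod_cast hs
  rcases le_or_gt s N with hsN | hNs
  · calc ∑ j ∈ range (s + 1), (N.choose j : ℝ) ≤ (exp 1 * N / s) ^ s :=
          sum_range_choose_le_exp_mul_div_pow hs hsN
      _ ≤ (1 + t) ^ s := by
          gcongr
          rw [div_le_iff₀ hs']; linarith
  · calc ∑ j ∈ range (s + 1), (N.choose j : ℝ) ≤ 2 ^ N := by
          simpa [one_add_one_eq_two] using sum_range_choose_mul_pow_le zero_le_one le_rfl s N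
      _ ≤ (1 + t) ^ s := two_pow_le_one_add_pow hNs.le ht
          (by nlinarith [add_one_le_exp (1 : ℝ), (N.cast_nonneg : (0 : ℝ) ≤ N)])

theorem M_lower_bound_general (n r d M : ℕ)
    (h : n.choose r <
      ∑ k ∈ Finset.Icc 1 (M + 1),
        (Finset.range (r * d + 1)).sup fun i => (2 * k).choose i) :
    (M : ℝ) + 3 ≥
      ((r * d + 1 : ℝ) / (2 * Real.exp 1)) *
        ((n.choose r : ℝ) ^ (1 / (r * d + 1 : ℝ)) - 1) := by
  obtain ⟨s, hs⟩ : ∃ s, s = r * d + 1 := ⟨_, rfl⟩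
  have hsR : (r * d + 1 : ℝ) = s := by simp [hs]
  rw [← hs] at h
  rw [hsR, ge_iff_le]
  have hs₀ : (0 : ℝ) < s := by rw [← hsR]; positivity
  set t : ℝ := 2 * exp 1 * (M + 3) / s
  have hsup (m : ℕ) : (range s).sup (fun i => m.choose i) ≤ ∑ i ∈ range s, m.choose i :=
    Finset.sup_le fun _ hi => single_le_sum (fun _ _ => Nat.zero_le _) hi
  have hchoose : n.choose r ≤ ∑ j ∈ range (s + 1), (2 * M + 3).choose j :=
    h.le.trans <| (sum_le_sum fun k _ => hsup (2 * k)).trans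
      (sum_Icc_sum_range_choose_two_mul_le M s)
  have hpow : (n.choose r : ℝ) ≤ (1 + t) ^ s :=
    calc (n.choose r : ℝ) ≤ ∑ j ∈ range (s + 1), ((2 * M + 3).choose j : ℝ) := by
          exact_mod_cast hchoose
      _ ≤ (1 + t) ^ s := sum_range_choose_le_one_add_pow (by exact_mod_cast hs₀) (by positivity)
          (by simp only [t]; rw [mul_div_cancel₀ _ hs₀.ne']; push_cast; nlinarith [exp_pos 1])
  have hroot : (n.choose r : ℝ) ^ (1 / (s : ℝ)) ≤ 1 + t := by
    rw [one_div, rpow_inv_le_iff_of_pos (Nat.cast_nonneg _) (by positivity) hs₀, rpow_natCast]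
    exact hpow
  calc (s : ℝ) / (2 * exp 1) * ((n.choose r : ℝ) ^ (1 / (s : ℝ)) - 1)
      ≤ s / (2 * exp 1) * t := by gcongr; linarith
    _ = M + 3 := by simp only [t]; field_simp

/-- If `∑_{k=1}^{M+1} max_{0 ≤ i ≤ rd} C(2k, i) > C(n, r)`, then
`M + 3 ≥ ((rd+1)/(2e)) (C(n,r)^{1/(rd+1)} − 1)`. -/
theorem M_lower_bound (n r d M : ℕ) (hr : 1 ≤ r) (hd : 1 ≤ d) (hM : 1 ≤ M)
    (hrn : 2 * r ≤ n)
    (h : n.choose r <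
      ∑ k ∈ Finset.Icc 1 (M + 1),
        (Finset.range (r * d + 1)).sup fun i => (2 * k).choose i) :
    (M : ℝ) + 3 ≥
      ((r * d + 1 : ℝ) / (2 * Real.exp 1)) *
        ((n.choose r : ℝ) ^ (1 / (r * d + 1 : ℝ)) - 1) :=
  M_lower_bound_general n r d M h
end
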